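/- The matrix B̃ = Σ_{m=1}^{n-1} f_m B_{n,m-1} (with B_{n,m} = ((m+1)/2)(B_{n,1})^m and real coefficients f_m) has eigenvalues λ̃_j = (1/2) Σ_{m=1}^{n-1} m f_m λ_j^{m-1} with corresponding eigenvectors v_j = (1, 2λ_j, 3λ_j^2, ..., n λ_j^{n-1}), for each root λ_j of P_n. -/
import Mathlib

open Finset

/-- The `k`-th elementary symmetric function of `l 1, …, l n`. -/
def esymm (n : ℕ) (l : Fin n → ℝ) (k : ℕ) : ℝ :=
  ∑ s ∈ Finset.univ.powersetCard k, ∏ i ∈ s, l i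

/-- The matrix `B_{n,1}`: superdiagonal entries `i/(i+1)` (1-based) and last row
entries `(-1)^{n-j} (n/j) σ_{n-j+1}`, with `σ` the elementary symmetric functions
of `λ_1, …, λ_n`. -/
noncomputable def Bn1 (n : ℕ) (l : Fin n → ℝ) : Matrix (Fin n) (Fin n) ℝ :=
  Matrix.of fun i j =>
    if i.val = n - 1 then
      (-1 : ℝ) ^ (n - 1 - j.val) * ((n : ℝ) / ((j.val : ℝ) + 1)) * esymm n l (n - j.val)
    else if j.val = i.val + 1 then ((i.val : ℝ) + 1) / ((i.val : ℝ) + 2)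
    else 0

lemma esymm_eq (n : ℕ) (l : Fin n → ℝ) (k : ℕ) :
    esymm n l k = (Finset.univ.val.map l).esymm k := by
  rw [Finset.esymm_map_val]; rfl

lemma root_identity (n : ℕ) (hn : 1 < n) (l : Fin n → ℝ) (j : Fin n) :
    ∑ k : Fin n, (-1 : ℝ) ^ (n - 1 - k.val) * esymm n l (n - k.val) * l j ^ k.val
      = l j ^ n := by
  clear hn
  open Polynomial in
  have hcard : Multiset.card (Finset.univ.val.map l) = n := by simp
  open Polynomial in
  have hprod : (∏ i : Fin n, (X - C (l i))) =
      ∑ jj ∈ Finset.range (n + 1), (-1 : ℝ[X]) ^ jj * (C (esymm n l jj) * X ^ (n - jj)) := by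
    have h := Multiset.prod_X_sub_X_eq_sum_esymm (Finset.univ.val.map l)
    rw [Multiset.map_map, hcard] at h
    rw [Finset.prod]
    rw [show ((fun t => X - C t) ∘ l) = fun i => X - C (l i) from rfl] at h
    rw [h]
    exact Finset.sum_congr rfl fun jj _ => by rw [esymm_eq]
  have heval : (0 : ℝ)
      = ∑ jj ∈ Finset.range (n + 1), (-1 : ℝ) ^ jj * esymm n l jj * (l j) ^ (n - jj) := by
    open Polynomial in
    have h0 : Polynomial.eval (l j) (∏ i : Fin n, (X - C (l i))) = 0 := by
      rw [Polynomial.eval_prod]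
      exact Finset.prod_eq_zero (Finset.mem_univ j) (by simp)
    rw [hprod] at h0
    rw [← h0, Polynomial.eval_finset_sum]
    exact Finset.sum_congr rfl fun jj _ => by simp [mul_assoc]
  set g : ℕ → ℝ := fun jj => (-1 : ℝ) ^ jj * esymm n l jj * (l j) ^ (n - jj) with hg
  have h0 : g 0 = l j ^ n := by simp [hg, esymm]
  have hs : ∑ jj ∈ Finset.range (n + 1), g jj = ∑ i ∈ Finset.range n, g (i + 1) + g 0 :=
    Finset.sum_range_succ' g n
  have hrefl : ∑ i ∈ Finset.range n, g (n - i) = ∑ i ∈ Finset.range n, g (i + 1) := by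
    rw [← Finset.sum_range_reflect (fun i => g (i + 1)) n]
    refine Finset.sum_congr rfl fun i hi => ?_
    rw [Finset.mem_range] at hi
    congr 1; omega
  have key : ∑ k : Fin n, (-1 : ℝ) ^ (n - 1 - k.val) * esymm n l (n - k.val) * l j ^ k.val
      = -∑ i ∈ Finset.range n, g (n - i) := by
    rw [Fin.sum_univ_eq_sum_range
      (fun k => (-1 : ℝ) ^ (n - 1 - k) * esymm n l (n - k) * l j ^ k) n,
      ← Finset.sum_neg_distrib]
    refine Finset.sum_congr rfl fun k hk => ?_
    rw [Finset.mem_range] at hk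
    simp only [hg]
    rw [show n - (n - k) = k from by omega, show n - k = (n - 1 - k) + 1 from by omega, pow_succ]
    ring
  have hsum : ∑ i ∈ Finset.range n, g (i + 1) = -g 0 := by
    have := heval; rw [hs] at this; linarith
  rw [key, hrefl, hsum, h0, neg_neg]

lemma Bn1_mulVec (n : ℕ) (hn : 1 < n) (l : Fin n → ℝ) (j : Fin n) (v : Fin n → ℝ)
    (hv : ∀ i : Fin n, v i = ((i.val : ℝ) + 1) * l j ^ i.val) :
    (Bn1 n l).mulVec v = l j • v := by
  funext i
  rw [Matrix.mulVec, dotProduct]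
  by_cases hi : i.val = n - 1
  · have hterm : ∀ k : Fin n, Bn1 n l i k * v k
        = (n : ℝ) * ((-1 : ℝ) ^ (n - 1 - k.val) * esymm n l (n - k.val) * l j ^ k.val) := by
      intro k
      have hk1 : ((k.val : ℝ) + 1) ≠ 0 := by positivity
      rw [Bn1, Matrix.of_apply, if_pos hi, hv k]
      field_simp
    rw [Finset.sum_congr rfl fun k _ => hterm k, ← Finset.mul_sum, root_identity n hn l j]
    rw [Pi.smul_apply, hv i, smul_eq_mul, hi]
    ring_nf
    have hp : l j * l j ^ (n - 1) = l j ^ n := by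
      rw [← pow_succ']; congr 1; omega
    rw [hp, Nat.cast_sub hn.le]
    push_cast
    ring
  · have hi' : i.val + 1 < n := by omega
    set k0 : Fin n := ⟨i.val + 1, hi'⟩ with hk0
    have hrow : ∀ k : Fin n, Bn1 n l i k * v k = if k = k0 then l j * v i else 0 := by
      intro k
      rw [Bn1, Matrix.of_apply, if_neg hi]
      by_cases hk : k = k0
      · rw [if_pos hk, hk, if_pos rfl, hv i, hv k0]
        have h2 : ((i.val : ℝ) + 2) ≠ 0 := by positivity
        simp only [hk0]
        push_cast
        field_simp
        ring
      · rw [if_neg (fun h => hk (Fin.ext h)), if_neg hk, zero_mul]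
    rw [Finset.sum_congr rfl fun k _ => hrow k, Finset.sum_ite_eq' Finset.univ k0]
    simp [Pi.smul_apply, smul_eq_mul]

lemma Bn1_pow_mulVec (n : ℕ) (hn : 1 < n) (l : Fin n → ℝ) (j : Fin n) (v : Fin n → ℝ)
    (hv : ∀ i : Fin n, v i = ((i.val : ℝ) + 1) * l j ^ i.val) (m : ℕ) :
    ((Bn1 n l) ^ m).mulVec v = (l j ^ m) • v := by
  induction m with
  | zero => simp [Matrix.one_mulVec]
  | succ m ih =>
    rw [pow_succ, ← Matrix.mulVec_mulVec, Bn1_mulVec n hn l j v hv,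
      Matrix.mulVec_smul, ih, smul_smul, pow_succ]
    rw [mul_comm]

/-- The matrix `B̃ = Σ_{m=1}^{n-1} f_m B_{n,m-1}` (where `B_{n,m} = ((m+1)/2)(B_{n,1})^m`)
has, for each root `λ_j` of `P_n`, the eigenvalue
`λ̃_j = (1/2) Σ_{m=1}^{n-1} m f_m λ_j^{m-1}` with eigenvector
`v_j = (1, 2λ_j, 3λ_j², …, n λ_j^{n-1})`. -/
theorem Btilde_eigenvector (n : ℕ) (hn : 1 < n) (l : Fin n → ℝ) (f : ℕ → ℝ)
    (Btilde : Matrix (Fin n) (Fin n) ℝ)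
    (hB : Btilde = ∑ m ∈ Finset.Icc 1 (n - 1), f m • (((m : ℝ) / 2) • (Bn1 n l) ^ (m - 1)))
    (j : Fin n) (v : Fin n → ℝ)
    (hv : ∀ i : Fin n, v i = ((i.val : ℝ) + 1) * l j ^ i.val) :
    Btilde.mulVec v =
      ((1 / 2 : ℝ) * ∑ m ∈ Finset.Icc 1 (n - 1), (m : ℝ) * f m * l j ^ (m - 1)) • v := by
  have hsum : (∑ m ∈ Finset.Icc 1 (n - 1), f m • (((m : ℝ) / 2) • (Bn1 n l) ^ (m - 1))).mulVec v
      = ∑ m ∈ Finset.Icc 1 (n - 1), (f m • (((m : ℝ) / 2) • (Bn1 n l) ^ (m - 1))).mulVec v := by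
    funext i
    simp [Matrix.mulVec, dotProduct, Matrix.sum_apply, Finset.sum_mul]
    rw [Finset.sum_comm]
  rw [hB, hsum, Finset.mul_sum, Finset.sum_smul]
  refine Finset.sum_congr rfl fun m _ => ?_
  rw [Matrix.smul_mulVec, Matrix.smul_mulVec,
    Bn1_pow_mulVec n hn l j v hv (m - 1), smul_smul, smul_smul]
  congr 1
  ring
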